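/- arXiv:2208.02330 — 2 statements merged into one kernel-verified Lean document; each statement's English description precedes it below -/
import Mathlib

section
/- For any finite alphabet Σ_q with q ≥ 4, and any irreducible string u of length n-1 over Σ_q (a string containing no tandem repeat vv with |v| ≤ 3), there exist at least q-2 symbols a ∈ Σ_q such that the string ua of length n is also irreducible. -/
/-- A string (over `ℕ`, representing symbols of `Σ_q`) is irreducible if it contains
no tandem repeat `v ++ v` with `v` nonempty of length at most 3. -/
def Irred (x : List ℕ) : Prop :=
  ∀ u v w : List ℕ, x = u ++ v ++ v ++ w → v.length ≤ 3 → v = []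

/-! Reading `u ++ [a]` backwards as `a :: u.reverse`, a new tandem repeat must be a prefix
`v ++ v` with `|v| ≤ 3`. Each length of `v` pins `a` to one earlier symbol: the last symbol
of `u` for `|v| = 1`, the second-to-last for `|v| = 2` (which forces the last and
third-to-last symbols to agree), and the third-to-last for `|v| = 3`. In the last case the
last and third-to-last symbols differ, since otherwise `u` already contains a square of
length 2; so at most two symbols are forbidden. -/

theorem irred_reverse_iff {x : List ℕ} : Irred x.reverse ↔ Irred x := by
  suffices ∀ x : List ℕ, Irred x → Irred x.reverse from ⟨by simpa using this x.reverse, this x⟩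
  intro x hx u v w h
  have := hx w.reverse v.reverse u.reverse (by simpa using congrArg List.reverse h)
  simpa using this

theorem Irred.exists_tandem_prefix {r : List ℕ} {a : ℕ} (hr : Irred r) (h : ¬ Irred (a :: r)) :
    ∃ v w : List ℕ, v ≠ [] ∧ v.length ≤ 3 ∧ a :: r = v ++ v ++ w := by
  simp only [Irred, not_forall] at h
  obtain ⟨p, v, w, hpvw, hlen, hv⟩ := h
  rcases p with _ | ⟨_, p⟩
  · exact ⟨v, w, hv, hlen, by simpa using hpvw⟩
  · exact absurd (hr p v w (by simpa using (List.cons_eq_cons.mp hpvw).2) hlen) hv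

theorem Irred.exists_forbidden_pair {r : List ℕ} (hr : Irred r) :
    ∃ b₁ b₂ : ℕ, ∀ a, ¬ Irred (a :: r) → a = b₁ ∨ a = b₂ := by
  refine ⟨r.headD 0, if r[0]? = r[2]? then r[1]?.getD 0 else r[2]?.getD 0, fun a ha => ?_⟩
  obtain ⟨v, w, hv, hlen, hvw⟩ := hr.exists_tandem_prefix ha
  rcases v with _ | ⟨c, _ | ⟨d, _ | ⟨e, _ | ⟨f, v⟩⟩⟩⟩
  · exact absurd rfl hv
  · simp only [List.cons_append, List.nil_append, List.cons.injEq] at hvw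
    obtain ⟨rfl, rfl⟩ := hvw
    simp
  · simp only [List.cons_append, List.nil_append, List.cons.injEq] at hvw
    obtain ⟨rfl, rfl⟩ := hvw
    simp
  · simp only [List.cons_append, List.nil_append, List.cons.injEq] at hvw
    obtain ⟨rfl, rfl⟩ := hvw
    have hdc : d ≠ a := by
      rintro rfl
      exact List.cons_ne_nil d [] (hr [d, e] [d] (e :: w) (by simp) (by simp))
    simp [hdc]
  · simp only [List.length_cons] at hlen
    omega

theorem le_ncard_of_forbidden_pair {P : ℕ → Prop} {b₁ b₂ : ℕ} (q : ℕ)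
    (h : ∀ a, ¬ P a → a = b₁ ∨ a = b₂) : q - 2 ≤ {a | a < q ∧ P a}.ncard := by
  have hsub : (↑(Finset.range q \ {b₁, b₂}) : Set ℕ) ⊆ {a | a < q ∧ P a} := by
    intro a ha
    simp only [Finset.coe_sdiff, Finset.coe_range, Set.mem_sdiff, Set.mem_Iio,
      Finset.coe_insert, Finset.coe_singleton, Set.mem_insert_iff, Set.mem_singleton_iff,
      not_or] at ha
    exact ⟨ha.1, by_contra fun hP => (h a hP).elim ha.2.1 ha.2.2⟩
  have hcard : q - 2 ≤ (Finset.range q \ {b₁, b₂}).card := by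
    have := Finset.le_card_sdiff {b₁, b₂} (Finset.range q)
    have := Finset.card_le_two (a := b₁) (b := b₂)
    simp only [Finset.card_range] at *
    omega
  calc q - 2 ≤ (Finset.range q \ {b₁, b₂}).card := hcard
    _ = (↑(Finset.range q \ {b₁, b₂}) : Set ℕ).ncard := (Set.ncard_coe_finset _).symm
    _ ≤ {a | a < q ∧ P a}.ncard :=
      Set.ncard_le_ncard hsub ((Set.finite_Iio q).subset fun _ ha => ha.1)

theorem stmt0_general (q : ℕ) (u : List ℕ)
    (hu_irr : Irred u) :
    q - 2 ≤ Set.ncard {a : ℕ | a < q ∧ Irred (u ++ [a])} := by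
  obtain ⟨b₁, b₂, hforbidden⟩ := (irred_reverse_iff.mpr hu_irr).exists_forbidden_pair
  refine le_ncard_of_forbidden_pair q fun a ha => hforbidden a fun h => ha ?_
  simpa using irred_reverse_iff.mpr h

/-- For `q ≥ 4` and any irreducible string `u` of length `n - 1` over `Σ_q`, there are
at least `q - 2` symbols `a ∈ Σ_q` such that `u ++ [a]` (of length `n`) is irreducible. -/
theorem stmt0 (q n : ℕ) (hq : 4 ≤ q) (u : List ℕ)
    (hu_len : u.length = n - 1) (hu_alpha : ∀ c ∈ u, c < q) (hu_irr : Irred u) :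
    q - 2 ≤ Set.ncard {a : ℕ | a < q ∧ Irred (u ++ [a])} :=
  stmt0_general q u hu_irr
end

section
/- Fix q ≥ 3 and the marker σ = 01020 (irreducible of length 5 over Σ_q). Model irreducible strings as paths in the directed graph G_q whose vertices are the irreducible 5-tuples over Σ_q and which has an edge a₁a₂a₃a₄a₅ → a₂a₃a₄a₅a₆ whenever a₁a₂a₃a₄a₅a₆ is irreducible. Assume every vertex of G_q has at least q - 2 outgoing edges. Then for q ≥ 6, from every vertex of G_q there exists a path of length exactly 10 ending at the vertex 01020, whose first 5 edge labels all lie in {3,4,5}; consequently, for every irreducible string x over Σ_q there exists a string b of length 5 such that x·b·01020 is irreducible. -/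
/-- Pointwise (index-based) version of irreducibility. -/
def CheckP (x : List ℕ) : Prop :=
  ∀ i k : ℕ, 1 ≤ k → k ≤ 3 → i + k + k ≤ x.length →
    ¬ (∀ j < k, x.getD (i + j) 0 = x.getD (i + k + j) 0)

lemma irred_of_checkP {x : List ℕ} (h : CheckP x) : Irred x := by
  intro u v w hx hk
  by_contra hv
  have hvpos : 1 ≤ v.length := List.length_pos_iff.2 hv
  apply h u.length v.length hvpos hk
  · subst hx; simp [List.length_append]; omega
  · intro j hj
    have h1 : x.getD (u.length + j) 0 = v.getD j 0 := by
      subst hx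
      rw [List.append_assoc, List.append_assoc, List.getD_append_right _ _ _ _ (by omega),
        Nat.add_sub_cancel_left, List.getD_append _ _ _ _ (by omega)]
    have h2 : x.getD (u.length + v.length + j) 0 = v.getD j 0 := by
      subst hx
      rw [List.append_assoc, List.append_assoc, List.getD_append_right _ _ _ _ (by omega)]
      have : u.length + v.length + j - u.length = v.length + j := by omega
      rw [this, List.getD_append_right _ _ _ _ (by omega), Nat.add_sub_cancel_left,
        List.getD_append _ _ _ _ (by omega)]
    rw [h1, h2]

lemma checkP_of_irred {x : List ℕ} (h : Irred x) : CheckP x := by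
  intro i k hk1 hk3 hlen hpairs
  have hdec : x = x.take i ++ (x.drop i).take k ++ ((x.drop (i+k)).take k) ++ x.drop (i+k+k) := by
    have e1 : (x.drop i).drop k = x.drop (i + k) := by
      rw [List.drop_drop]
    have e2 : (x.drop (i+k)).drop k = x.drop (i + k + k) := by
      rw [List.drop_drop]
    calc x = x.take i ++ x.drop i := (List.take_append_drop i x).symm
    _ = x.take i ++ ((x.drop i).take k ++ (x.drop i).drop k) := by
        rw [List.take_append_drop k (x.drop i)]
    _ = x.take i ++ ((x.drop i).take k ++ ((x.drop (i+k)).take k ++ (x.drop (i+k)).drop k)) := by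
        rw [e1, List.take_append_drop k (x.drop (i+k))]
    _ = _ := by simp [e2, List.append_assoc]
  have heq : (x.drop i).take k = (x.drop (i+k)).take k := by
    apply List.ext_getElem
    · simp; omega
    · intro j hj1 hj2
      have hj : j < k := by simp at hj1; omega
      have := hpairs j hj
      have g1 : x.getD (i + j) 0 = ((x.drop i).take k)[j] := by
        rw [List.getD_eq_getElem _ _ (by omega)]
        simp [List.getElem_take, List.getElem_drop]
      have g2 : x.getD (i + k + j) 0 = ((x.drop (i+k)).take k)[j] := by
        rw [List.getD_eq_getElem _ _ (by omega)]
        simp [List.getElem_take, List.getElem_drop]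
      rw [← g1, ← g2, this]
  rw [heq] at hdec
  have hk3' : ((x.drop (i+k)).take k).length ≤ 3 := by simp; omega
  have := h _ _ _ hdec hk3'
  have : ((x.drop (i+k)).take k).length = k := by simp; omega
  rw [‹(x.drop (i+k)).take k = []›] at this
  simp at this
  omega

lemma pick (p r : ℕ) : ∃ a : ℕ, (a = 3 ∨ a = 4 ∨ a = 5) ∧ a ≠ p ∧ a ≠ r := by
  rcases Decidable.em (p = 3 ∨ r = 3) with h | h
  · rcases Decidable.em (p = 4 ∨ r = 4) with h' | h'
    · exact ⟨5, by omega⟩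
    · exact ⟨4, by omega⟩
  · exact ⟨3, by omega⟩

lemma step {x : List ℕ} (h : CheckP x) :
    ∃ a : ℕ, (a = 3 ∨ a = 4 ∨ a = 5) ∧ CheckP (x ++ [a]) := by
  set n := x.length with hn
  set L0 := x.getD (n-1) 0 with hL0
  set L1 := x.getD (n-2) 0 with hL1
  set L2 := x.getD (n-3) 0 with hL2
  have key : ∀ a : ℕ, a ≠ L0 → (L2 = L0 → a ≠ L1) → a ≠ L2 → CheckP (x ++ [a]) := by
    intro a h0 h1 h2 i k hk1 hk3 hlen hpairs
    rw [List.length_append, List.length_singleton] at hlen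
    by_cases hin : i + k + k ≤ n
    · apply h i k hk1 hk3 hin
      intro j hj
      have := hpairs j hj
      rwa [List.getD_append _ _ _ _ (by omega), List.getD_append _ _ _ _ (by omega)] at this
    · -- i + k + k = n + 1
      have hik : i + k + k = n + 1 := by omega
      interval_cases k
      · have := hpairs 0 (by omega)
        rw [List.getD_append _ _ _ _ (by omega),
            List.getD_append_right _ _ _ _ (by omega)] at this
        have e1 : i + 0 = n - 1 := by omega
        have e2 : i + 1 + 0 - n = 0 := by omega
        rw [e1, e2, List.getD_cons_zero] at this
        exact h0 this.symm
      · have p0 := hpairs 0 (by omega)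
        have p1 := hpairs 1 (by omega)
        rw [List.getD_append _ _ _ _ (by omega),
            List.getD_append _ _ _ _ (by omega)] at p0
        rw [List.getD_append _ _ _ _ (by omega),
            List.getD_append_right _ _ _ _ (by omega)] at p1
        have e0 : i + 0 = n - 3 := by omega
        have e0' : i + 2 + 0 = n - 1 := by omega
        have e1 : i + 1 = n - 2 := by omega
        have e2 : i + 2 + 1 - n = 0 := by omega
        rw [e0, e0'] at p0
        rw [e1, e2, List.getD_cons_zero] at p1
        exact (h1 p0) p1.symm
      · have p2 := hpairs 2 (by omega)
        rw [List.getD_append _ _ _ _ (by omega),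
            List.getD_append_right _ _ _ _ (by omega)] at p2
        have e1 : i + 2 = n - 3 := by omega
        have e2 : i + 3 + 2 - n = 0 := by omega
        rw [e1, e2, List.getD_cons_zero] at p2
        exact h2 p2.symm
  by_cases hc : L2 = L0
  · obtain ⟨a, ha, h0, h1⟩ := pick L0 L1
    exact ⟨a, ha, key a h0 (fun _ => h1) (hc ▸ h0)⟩
  · obtain ⟨a, ha, h0, h2⟩ := pick L0 L2
    exact ⟨a, ha, key a h0 (fun hx => absurd hx hc) h2⟩

lemma extendN (n : ℕ) (x : List ℕ) (h : CheckP x) :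
    ∃ b : List ℕ, b.length = n ∧ (∀ a ∈ b, a = 3 ∨ a = 4 ∨ a = 5) ∧ CheckP (x ++ b) := by
  induction n with
  | zero => exact ⟨[], rfl, by simp, by simpa using h⟩
  | succ m ih =>
    obtain ⟨b, hb1, hb2, hb3⟩ := ih
    obtain ⟨a, ha, hcheck⟩ := step hb3
    refine ⟨b ++ [a], by simp [hb1], ?_, by rw [← List.append_assoc]; exact hcheck⟩
    intro c hc
    rcases List.mem_append.1 hc with hc | hc
    · exact hb2 c hc
    · simp at hc; subst hc; exact ha

lemma checkR : ∀ i < 5, ∀ k < 4, 1 ≤ k → i + k + k ≤ 5 →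
    ¬ (∀ j < k, ([0,1,0,2,0] : List ℕ).getD (i + j) 0 = ([0,1,0,2,0] : List ℕ).getD (i + k + j) 0) := by
  decide

lemma Rsmall : ∀ m < 5, ([0,1,0,2,0] : List ℕ).getD m 0 ≤ 2 := by decide

lemma boundary {L : List ℕ} (hL : CheckP L)
    (htail : ∀ j, j < L.length → L.length ≤ j + 3 → 3 ≤ L.getD j 0) :
    CheckP (L ++ [0,1,0,2,0]) := by
  intro i k hk1 hk3 hlen hpairs
  have hlen5 : (L ++ [0,1,0,2,0]).length = L.length + 5 := by simp
  rw [hlen5] at hlen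
  rcases le_or_gt (i + k + k) L.length with hin | hin
  · apply hL i k hk1 hk3 hin
    intro j hj
    have := hpairs j hj
    rwa [List.getD_append _ _ _ _ (by omega), List.getD_append _ _ _ _ (by omega)] at this
  rcases le_or_gt L.length i with hni | hni
  · apply checkR (i - L.length) (by omega) k (by omega) hk1 (by omega)
    intro j hj
    have := hpairs j hj
    rw [List.getD_append_right _ _ _ _ (by omega),
        List.getD_append_right _ _ _ _ (by omega)] at this
    have e1 : i + j - L.length = i - L.length + j := by omega
    have e2 : i + k + j - L.length = i - L.length + k + j := by omega
    rwa [e1, e2] at this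
  · -- straddle
    obtain ⟨j, hj1, hj2, hj3⟩ : ∃ j, j < k ∧ i + j < L.length ∧ L.length ≤ i + k + j := by
      rcases le_or_gt L.length (i + k) with h | h
      · exact ⟨0, by omega, by omega, by omega⟩
      · exact ⟨L.length - i - k, by omega, by omega, by omega⟩
    have := hpairs j hj1
    rw [List.getD_append _ _ _ _ (by omega),
        List.getD_append_right _ _ _ _ (by omega)] at this
    have left3 : 3 ≤ L.getD (i + j) 0 := htail _ hj2 (by omega)
    have right2 : ([0,1,0,2,0] : List ℕ).getD (i + k + j - L.length) 0 ≤ 2 :=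
      Rsmall _ (by omega)
    omega

lemma tail345 {x b : List ℕ} (hb : b.length = 5)
    (h345 : ∀ a ∈ b, a = 3 ∨ a = 4 ∨ a = 5) :
    ∀ j, j < (x ++ b).length → (x ++ b).length ≤ j + 3 → 3 ≤ (x ++ b).getD j 0 := by
  intro j hj1 hj2
  rw [List.length_append, hb] at hj1 hj2
  rw [List.getD_append_right _ _ _ _ (by omega)]
  have hlt : j - x.length < b.length := by omega
  rw [List.getD_eq_getElem _ _ hlt]
  have := h345 _ (List.getElem_mem hlt)
  omega

lemma final {x b : List ℕ} (hb : b.length = 5)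
    (h345 : ∀ a ∈ b, a = 3 ∨ a = 4 ∨ a = 5) (h : CheckP (x ++ b)) :
    Irred (x ++ b ++ [0,1,0,2,0]) :=
  irred_of_checkP (boundary h (tail345 hb h345))


/-- Vertices of the graph `G_q` are the irreducible 5-tuples over `Σ_q`; there is an
edge labelled `a` from `v` whenever `v ++ [a]` (a 6-window) is irreducible.  Assuming
every vertex has at least `q - 2` outgoing edges and `q ≥ 6`:  from every vertex there
is a path of length exactly 10 ending at the vertex `01020` whose first 5 edge labels
lie in `{3,4,5}`; consequently, for every irreducible `x` over `Σ_q` there is a string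
`b` of length 5 with `x ++ b ++ 01020` irreducible. -/
theorem stmt16 (q : ℕ) (hq : 6 ≤ q)
    (hout : ∀ v : List ℕ, v.length = 5 → Irred v → (∀ c ∈ v, c < q) →
      q - 2 ≤ Set.ncard {a : ℕ | a < q ∧ Irred (v ++ [a])}) :
    (∀ v : List ℕ, v.length = 5 → Irred v → (∀ c ∈ v, c < q) →
      ∃ e : List ℕ, e.length = 10 ∧ (∀ a ∈ e, a < q) ∧
        (∀ a ∈ e.take 5, a = 3 ∨ a = 4 ∨ a = 5) ∧
        Irred (v ++ e) ∧ (v ++ e).drop 10 = [0, 1, 0, 2, 0]) ∧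
    (∀ x : List ℕ, Irred x → (∀ c ∈ x, c < q) →
      ∃ b : List ℕ, b.length = 5 ∧ Irred (x ++ b ++ [0, 1, 0, 2, 0])) := by
  constructor
  · intro v hv5 hirr hlt
    obtain ⟨b, hb1, hb2, hb3⟩ := extendN 5 v (checkP_of_irred hirr)
    refine ⟨b ++ [0,1,0,2,0], by simp [hb1], ?_, ?_, ?_, ?_⟩
    · intro a ha
      rcases List.mem_append.1 ha with ha | ha
      · have := hb2 a ha; omega
      · simp at ha; omega
    · intro a ha
      have htk : (b ++ [0,1,0,2,0]).take 5 = b := by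
        rw [← hb1, List.take_left]
      rw [htk] at ha
      exact hb2 a ha
    · rw [← List.append_assoc]
      exact final hb1 hb2 hb3
    · rw [← List.append_assoc]
      have hlen : (v ++ b).length = 10 := by simp [hv5, hb1]
      rw [show (10:ℕ) = (v ++ b).length from hlen.symm, List.drop_left]
  · intro x hirr hlt
    obtain ⟨b, hb1, hb2, hb3⟩ := extendN 5 x (checkP_of_irred hirr)
    exact ⟨b, hb1, final hb1 hb2 hb3⟩
end
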